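/- arXiv:2510.27056 — 2 statements merged into one kernel-verified Lean document; each statement's English description precedes it below -/
import Mathlib

section
/- Let θ₀ < √(d·(2+q−√(8q+q²))/2), where q := 1 − (2p−1)²/2, and set ρ := (1+θ₀²/d)/(1−θ₀²/d)² · (1 − (2p−1)²/2). Then ρ ∈ (0,1), and for every θ ∈ [0, θ₀], m(θ) ≤ ρ·θ. -/
open MeasureTheory Real Set
open scoped ENNReal

noncomputable section

namespace OMDA

/-- `t_p(x)`. -/
def tp (p x : ℝ) : ℝ :=
  (p * Real.exp x - (1 - p) * Real.exp (-x)) / (p * Real.exp x + (1 - p) * Real.exp (-x))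

/-- `c_p(x)`. -/
def cp (p x : ℝ) : ℝ := p * Real.exp x + (1 - p) * Real.exp (-x)

/-- The standard normal density on `ℝ`. -/
def phi1 (z : ℝ) : ℝ := Real.exp (-z ^ 2 / 2) / Real.sqrt (2 * π)

/-- Expectation of `g Z` for `Z ∼ N(0,1)`. -/
def gexp (g : ℝ → ℝ) : ℝ := ∫ z : ℝ, g z * phi1 z

/-- The univariate population EM map `m(θ)`. -/
def m (p : ℝ) (d : ℕ) (θ : ℝ) : ℝ :=
  gexp fun z => tp p (θ * z / (1 - θ ^ 2 / d)) * z

/-- The radial negative population log-likelihood `ℓ(θ)`. -/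
def ell (p : ℝ) (d : ℕ) (θ : ℝ) : ℝ :=
  (d / 2 : ℝ) * Real.log (2 * π * (1 - θ ^ 2 / d)) + ((d : ℝ) + θ ^ 2) / (2 * (1 - θ ^ 2 / d))
    - gexp fun z => Real.log (cp p (θ * z / (1 - θ ^ 2 / d)))

/-- `q := 1 - (2p-1)²/2`. -/
def qp (p : ℝ) : ℝ := 1 - (2 * p - 1) ^ 2 / 2

/-- The initialization radius `√(d·(2+q−√(8q+q²))/2)`. -/
def θmax (p : ℝ) (d : ℕ) : ℝ :=
  Real.sqrt ((d : ℝ) * (2 + qp p - Real.sqrt (8 * qp p + qp p ^ 2)) / 2)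

/-- `ρ := (1+θ₀²/d)/(1−θ₀²/d)² · (1 − (2p−1)²/2)`. -/
def ρc (p : ℝ) (d : ℕ) (θ0 : ℝ) : ℝ :=
  (1 + θ0 ^ 2 / d) / (1 - θ0 ^ 2 / d) ^ 2 * (1 - (2 * p - 1) ^ 2 / 2)

/-- `ℝᵈ` with the Euclidean norm. -/
abbrev E (d : ℕ) := EuclideanSpace ℝ (Fin d)

/-- Density of `N(ν, σ²·I_d)` on `ℝᵈ`. -/
def gpdf (d : ℕ) (ν : E d) (σ2 : ℝ) (x : E d) : ℝ :=
  (2 * π * σ2) ^ (-(d : ℝ) / 2) * Real.exp (-‖x - ν‖ ^ 2 / (2 * σ2))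

/-- Density of the mixture `(1−p)·N(ν−θ, σ²I) + p·N(ν+θ, σ²I)`. -/
def mixPdf (p : ℝ) (d : ℕ) (ν θ : E d) (σ2 : ℝ) (x : E d) : ℝ :=
  (1 - p) * gpdf d (ν - θ) σ2 x + p * gpdf d (ν + θ) σ2 x

/-- The population EM operator `M(θ)`. -/
def Mop (p : ℝ) (d : ℕ) (θ : E d) : E d :=
  ∫ z : E d, (gpdf d 0 1 z * tp p ((inner ℝ θ z : ℝ) / (1 - ‖θ‖ ^ 2 / d))) • z

/-- KL divergence `D_KL[N(0,I_d) ∥ G(θ, σ²)]`, written via densities. -/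
def klStd (p : ℝ) (d : ℕ) (θ : E d) (σ2 : ℝ) : ℝ :=
  ∫ z : E d, gpdf d 0 1 z * Real.log (gpdf d 0 1 z / mixPdf p d 0 θ σ2 z)

/-- The standard normal cdf `Φ`. -/
def stdNormCdf (x : ℝ) : ℝ := ∫ z in Iic x, phi1 z

/-- Misclassification probability of a classifier `h` under the distribution `D`
with class-conditional laws `N(±μ, I_d)` and balanced classes. -/
def errProb (d : ℕ) (μ : E d) (h : E d → ℝ) : ℝ :=
  (1 / 2) * (∫ x in {x | h x ≠ 1}, gpdf d μ 1 x)
    + (1 / 2) * (∫ x in {x | h x ≠ -1}, gpdf d (-μ) 1 x)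

/-- The measure `N(ν, I_d)` on `ℝᵈ`, via its density. -/
def gaussMeasure (d : ℕ) (ν : E d) : Measure (E d) :=
  volume.withDensity fun x => ENNReal.ofReal (gpdf d ν 1 x)

/-- The standard Gaussian measure `N(0, I_d)`. -/
def stdGaussMeasure (d : ℕ) : Measure (E d) := gaussMeasure d 0

/-- The joint distribution `D` of `(X, Y)` on `ℝᵈ × ℝ`. -/
def Dmeas (d : ℕ) (μ : E d) : Measure (E d × ℝ) :=
  (1 / 2 : ℝ≥0∞) • ((gaussMeasure d μ).prod (Measure.dirac (1 : ℝ)))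
    + (1 / 2 : ℝ≥0∞) • ((gaussMeasure d (-μ)).prod (Measure.dirac (-1 : ℝ)))

/-- Chi-squared measure with `k` degrees of freedom. -/
def chiSqMeasure (k : ℕ) : Measure ℝ := ProbabilityTheory.gammaMeasure ((k : ℝ) / 2) (1 / 2)


variable {p : ℝ} (hp : p ∈ Set.Ioo (1/2 : ℝ) 1)

lemma cp_pos (hp : p ∈ Set.Ioo (1/2 : ℝ) 1) (x : ℝ) : 0 < cp p x := by
  have h1 : 0 < p := by linarith [hp.1]
  have h2 : 0 < 1 - p := by linarith [hp.2]
  have := Real.exp_pos x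
  have := Real.exp_pos (-x)
  unfold cp; positivity

lemma tp_zero (hp : p ∈ Set.Ioo (1/2 : ℝ) 1) : tp p 0 = 2 * p - 1 := by
  simp [tp, Real.exp_zero]; ring

lemma tp_mem (hp : p ∈ Set.Ioo (1/2 : ℝ) 1) (x : ℝ) : tp p x ∈ Set.Icc (-1 : ℝ) 1 := by
  have hc := cp_pos hp x
  have h1 : 0 < p := by linarith [hp.1]
  have h2 : 0 < 1 - p := by linarith [hp.2]
  have e1 := Real.exp_pos x
  have e2 := Real.exp_pos (-x)
  unfold cp at hc
  constructor
  · rw [tp, le_div_iff₀ hc]; nlinarith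
  · rw [tp, div_le_one hc]; nlinarith

lemma hasDerivAt_tp (hp : p ∈ Set.Ioo (1/2 : ℝ) 1) (x : ℝ) :
    HasDerivAt (tp p) (1 - (tp p x) ^ 2) x := by
  have hc := cp_pos hp x
  have hnum : HasDerivAt (fun x => p * Real.exp x - (1 - p) * Real.exp (-x))
      (p * Real.exp x + (1 - p) * Real.exp (-x)) x := by
    have h1 : HasDerivAt (fun x => p * Real.exp x) (p * Real.exp x) x :=
      (Real.hasDerivAt_exp x).const_mul p
    have h2 : HasDerivAt (fun x : ℝ => (1 - p) * Real.exp (-x))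
        ((1 - p) * (Real.exp (-x) * (-1))) x :=
      (((Real.hasDerivAt_exp (-x)).comp x (hasDerivAt_neg x))).const_mul (1 - p)
    exact (h1.sub h2).congr_deriv (by ring)
  have hden : HasDerivAt (fun x => p * Real.exp x + (1 - p) * Real.exp (-x))
      (p * Real.exp x - (1 - p) * Real.exp (-x)) x := by
    have h1 : HasDerivAt (fun x => p * Real.exp x) (p * Real.exp x) x :=
      (Real.hasDerivAt_exp x).const_mul p
    have h2 : HasDerivAt (fun x : ℝ => (1 - p) * Real.exp (-x))
        ((1 - p) * (Real.exp (-x) * (-1))) x :=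
      (((Real.hasDerivAt_exp (-x)).comp x (hasDerivAt_neg x))).const_mul (1 - p)
    exact (h1.add h2).congr_deriv (by ring)
  have := hnum.div hden (by unfold cp at hc; exact ne_of_gt hc)
  refine this.congr_deriv ?_
  have hc' : (p * Real.exp x + (1 - p) * Real.exp (-x)) ≠ 0 := by unfold cp at hc; linarith
  rw [tp]
  field_simp

lemma tp_monotone (hp : p ∈ Set.Ioo (1/2 : ℝ) 1) : Monotone (tp p) := by
  apply monotone_of_deriv_nonneg
  · exact fun x => (hasDerivAt_tp hp x).differentiableAt
  · intro x
    rw [(hasDerivAt_tp hp x).deriv]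
    have h := tp_mem hp x
    nlinarith [h.1, h.2]

lemma tp_le_affine (hp : p ∈ Set.Ioo (1/2 : ℝ) 1) {x : ℝ} (hx : 0 ≤ x) :
    tp p x ≤ (2*p-1) + (1 - (2*p-1)^2) * x := by
  set c := 2*p-1 with hc
  have hc0 : 0 ≤ c := by rw [hc]; linarith [hp.1]
  have key : MonotoneOn (fun x => c + (1 - c^2) * x - tp p x) (Set.Ici 0) := by
    apply monotoneOn_of_deriv_nonneg (convex_Ici 0)
    · apply Continuous.continuousOn
      have : Continuous (tp p) := by
        apply Continuous.div (by fun_prop) (by fun_prop)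
        intro x; exact ne_of_gt (cp_pos hp x)
      fun_prop
    · intro y hy
      exact (((hasDerivAt_const y c).add ((hasDerivAt_id y).const_mul (1-c^2))).sub
        (hasDerivAt_tp hp y)).differentiableAt.differentiableWithinAt
    · intro y hy
      rw [interior_Ici] at hy
      have hd : HasDerivAt (fun x => c + (1 - c^2) * x - tp p x)
          ((1 - c^2) - (1 - tp p y ^ 2)) y := by
        have h1 : HasDerivAt (fun x : ℝ => c + (1 - c^2) * x) (1 - c^2) y := by
          simpa using ((hasDerivAt_id y).const_mul (1-c^2)).const_add c
        exact h1.sub (hasDerivAt_tp hp y)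
      rw [hd.deriv]
      have hmono := tp_monotone hp (le_of_lt hy)
      rw [tp_zero hp] at hmono
      nlinarith
  have := key (Set.self_mem_Ici) hx hx
  simp only [tp_zero hp, ← hc] at this
  linarith [this]

lemma tp_ge_affine (hp : p ∈ Set.Ioo (1/2 : ℝ) 1) {x : ℝ} (hx : x ≤ 0) :
    (2*p-1) + x ≤ tp p x := by
  set c := 2*p-1 with hc
  have key : AntitoneOn (fun x => tp p x - c - x) (Set.Iic 0) := by
    apply antitoneOn_of_deriv_nonpos (convex_Iic 0)
    · have : Continuous (tp p) := by
        apply Continuous.div (by fun_prop) (by fun_prop)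
        intro x; exact ne_of_gt (cp_pos hp x)
      fun_prop
    · intro y hy
      exact ((hasDerivAt_tp hp y).sub_const c).sub (hasDerivAt_id y)
        |>.differentiableAt.differentiableWithinAt
    · intro y hy
      have hd : HasDerivAt (fun x => tp p x - c - x) ((1 - tp p y ^ 2) - 1) y := by
        exact (((hasDerivAt_tp hp y).sub_const c).sub (hasDerivAt_id y)).congr_deriv (by ring)
      rw [hd.deriv]
      nlinarith [tp_mem hp y]
  have := key hx Set.self_mem_Iic hx
  simp only [tp_zero hp, ← hc] at this
  linarith

lemma tp_pointwise (hp : p ∈ Set.Ioo (1/2 : ℝ) 1) {a : ℝ} (ha : 0 ≤ a) (z : ℝ) :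
    tp p (a * z) * z ≤ (2*p-1) * z + a * ((if 0 ≤ z then 1 - (2*p-1)^2 else 1) * z ^ 2) := by
  rcases le_or_gt 0 z with hz | hz
  · rw [if_pos hz]
    have h := tp_le_affine hp (mul_nonneg ha hz)
    nlinarith [mul_le_mul_of_nonneg_right h hz]
  · rw [if_neg (not_le.mpr hz)]
    have h := tp_ge_affine hp (mul_nonpos_of_nonneg_of_nonpos ha hz.le)
    nlinarith [mul_le_mul_of_nonpos_right h hz.le]


lemma phi1_eq (z : ℝ) : phi1 z = (Real.sqrt (2 * π))⁻¹ * Real.exp (-(1/2) * z ^ 2) := by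
  rw [phi1]; ring_nf

lemma phi1_nonneg (z : ℝ) : 0 ≤ phi1 z := by
  rw [phi1]; positivity

lemma phi1_neg (z : ℝ) : phi1 (-z) = phi1 z := by simp [phi1]

lemma continuous_phi1 : Continuous phi1 := by unfold phi1; fun_prop

lemma integrable_abs_mul_phi1 : Integrable (fun z : ℝ => |z| * phi1 z) := by
  have h := integrable_mul_exp_neg_mul_sq (by norm_num : (0:ℝ) < 1/2)
  have h2 := (h.abs.const_mul (Real.sqrt (2 * π))⁻¹)
  apply h2.congr
  filter_upwards with z
  rw [phi1_eq, abs_mul, Real.abs_exp]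
  ring

lemma integrable_sq_mul_phi1 : Integrable (fun z : ℝ => z ^ 2 * phi1 z) := by
  have h := integrable_rpow_mul_exp_neg_mul_sq (by norm_num : (0:ℝ) < 1/2)
      (by norm_num : (-1:ℝ) < 2)
  have h2 := h.const_mul (Real.sqrt (2 * π))⁻¹
  apply h2.congr
  filter_upwards with z
  rw [phi1_eq, ← Real.rpow_natCast z 2]
  push_cast
  ring

lemma integral_id_mul_phi1 : ∫ z : ℝ, z * phi1 z = 0 := by
  have hi : Integrable (fun z : ℝ => z * phi1 z) := by
    apply integrable_abs_mul_phi1.mono' (continuous_id.mul continuous_phi1).aestronglyMeasurable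
    filter_upwards with z
    rw [Pi.mul_apply, id_eq, norm_mul, Real.norm_eq_abs, Real.norm_eq_abs, abs_of_nonneg (phi1_nonneg z)]
  have hIic : ∫ z in Iic (0:ℝ), z * phi1 z = - ∫ z in Ioi (0:ℝ), z * phi1 z := by
    have h := integral_comp_neg_Ioi (0:ℝ) (fun z => z * phi1 z)
    simp only [neg_zero] at h
    rw [← h]
    have : ∀ z : ℝ, -z * phi1 (-z) = -(z * phi1 z) := by intro z; rw [phi1_neg]; ring
    simp_rw [this, integral_neg]
  have := intervalIntegral.integral_Iic_add_Ioi (b := (0:ℝ)) (hi.integrableOn) (hi.integrableOn)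
  rw [hIic] at this
  linarith

lemma integral_Ioi_sq_mul_phi1 : ∫ z in Ioi (0:ℝ), z ^ 2 * phi1 z = 1/2 := by
  have hπ : 0 < Real.sqrt (2 * π) := Real.sqrt_pos.mpr (by positivity)
  -- integration by parts: (−z e^{−z²/2})' = (z²−1) e^{−z²/2}
  have hderiv : ∀ x ∈ Ici (0:ℝ), HasDerivAt (fun z : ℝ => -z * Real.exp (-(1/2) * z^2))
      ((x^2 - 1) * Real.exp (-(1/2) * x^2)) x := by
    intro x _
    have h1 : HasDerivAt (fun z : ℝ => Real.exp (-(1/2) * z^2))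
        (Real.exp (-(1/2) * x^2) * (-(1/2) * (2*x))) x := by
      apply HasDerivAt.exp
      have := ((hasDerivAt_pow 2 x).const_mul (-(1/2):ℝ))
      simpa using this
    have h2 : HasDerivAt (fun z : ℝ => -z) (-1 : ℝ) x := by exact (hasDerivAt_id x).neg
    have := h2.mul h1
    refine this.congr_deriv ?_
    ring
  have hint1 : IntegrableOn (fun x : ℝ => x^2 * Real.exp (-(1/2) * x^2)) (Ioi 0) := by
    have h := integrable_rpow_mul_exp_neg_mul_sq (by norm_num : (0:ℝ) < 1/2)
        (by norm_num : (-1:ℝ) < 2)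
    apply (h.congr ?_).integrableOn
    filter_upwards with z; rw [← Real.rpow_natCast z 2]; push_cast; ring_nf
  have hint2 : IntegrableOn (fun x : ℝ => Real.exp (-(1/2) * x^2)) (Ioi 0) :=
    (integrable_exp_neg_mul_sq (by norm_num : (0:ℝ) < 1/2)).integrableOn
  have hint : IntegrableOn (fun x : ℝ => (x^2 - 1) * Real.exp (-(1/2) * x^2)) (Ioi 0) := by
    apply (hint1.sub hint2).congr
    filter_upwards with x
    simp only [Pi.sub_apply]; ring
  have htend : Filter.Tendsto (fun z : ℝ => -z * Real.exp (-(1/2) * z^2))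
      Filter.atTop (nhds 0) := by
    have h := rpow_mul_exp_neg_mul_sq_isLittleO_exp_neg (by norm_num : (0:ℝ) < 1/2) 1
    have hlin : Filter.Tendsto (fun x : ℝ => -(1/2) * x) Filter.atTop Filter.atBot := by
      exact Filter.Tendsto.const_mul_atTop_of_neg (by norm_num) Filter.tendsto_id
    have h0 : Filter.Tendsto (fun x : ℝ => Real.exp (-(1/2) * x)) Filter.atTop (nhds 0) :=
      Real.tendsto_exp_atBot.comp hlin
    have ht := h.tendsto_zero_of_tendsto h0
    have : Filter.Tendsto (fun z : ℝ => z * Real.exp (-(1/2) * z^2)) Filter.atTop (nhds 0) := by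
      apply ht.congr'
      filter_upwards [Filter.eventually_ge_atTop (0:ℝ)] with x hx
      rw [Real.rpow_one]
    simpa using this.neg
  have key := integral_Ioi_of_hasDerivAt_of_tendsto'
      (f := fun z : ℝ => -z * Real.exp (-(1/2) * z^2)) hderiv hint htend
  have key0 : ∫ x in Ioi (0:ℝ), (x^2 - 1) * Real.exp (-(1/2) * x^2) = 0 := by
    rw [key]; norm_num
  have hsplit : ∫ x in Ioi (0:ℝ), x^2 * Real.exp (-(1/2) * x^2)
      = ∫ x in Ioi (0:ℝ), Real.exp (-(1/2) * x^2) := by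
    have heq : (∫ x in Ioi (0:ℝ), (x^2 * Real.exp (-(1/2) * x^2) - Real.exp (-(1/2) * x^2)))
        = ∫ x in Ioi (0:ℝ), (x^2 - 1) * Real.exp (-(1/2) * x^2) :=
      setIntegral_congr_fun measurableSet_Ioi (fun x _ => by ring)
    have hs := integral_sub hint1 hint2
    rw [heq, key0] at hs
    linarith
  have hgauss : ∫ x in Ioi (0:ℝ), Real.exp (-(1/2) * x^2) = Real.sqrt (2*π) / 2 := by
    have hg := integral_gaussian_Ioi (1/2)
    rw [show ((π : ℝ) / (1/2)) = 2 * π by ring] at hg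
    exact hg
  calc ∫ z in Ioi (0:ℝ), z ^ 2 * phi1 z
      = (Real.sqrt (2 * π))⁻¹ * ∫ x in Ioi (0:ℝ), x^2 * Real.exp (-(1/2) * x^2) := by
        rw [← integral_const_mul]
        apply setIntegral_congr_fun measurableSet_Ioi
        intro z _; simp only [phi1_eq]; ring
    _ = 1/2 := by rw [hsplit, hgauss]; field_simp

lemma integral_Iic_sq_mul_phi1 : ∫ z in Iic (0:ℝ), z ^ 2 * phi1 z = 1/2 := by
  have h := integral_comp_neg_Ioi (0:ℝ) (fun z => z ^ 2 * phi1 z)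
  simp only [neg_zero] at h
  rw [← h, ← integral_Ioi_sq_mul_phi1]
  apply setIntegral_congr_fun measurableSet_Ioi
  intro z _
  simp only [phi1_neg, neg_sq]

lemma continuous_tp (hp : p ∈ Set.Ioo (1/2 : ℝ) 1) : Continuous (tp p) := by
  apply Continuous.div (by fun_prop) (by fun_prop)
  intro x; exact ne_of_gt (cp_pos hp x)

lemma integrable_id_mul_phi1 : Integrable (fun z : ℝ => z * phi1 z) := by
  apply integrable_abs_mul_phi1.mono' (continuous_id.mul continuous_phi1).aestronglyMeasurable
  filter_upwards with z
  rw [Pi.mul_apply, id_eq, norm_mul, Real.norm_eq_abs, Real.norm_eq_abs, abs_of_nonneg (phi1_nonneg z)]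

lemma key_integral_bound (hp : p ∈ Set.Ioo (1/2 : ℝ) 1) {a : ℝ} (ha : 0 ≤ a) :
    ∫ z : ℝ, tp p (a * z) * z * phi1 z ≤ a * (1 - (2*p-1)^2/2) := by
  set c := 2*p-1 with hc
  set w : ℝ → ℝ := fun z => if 0 ≤ z then 1 - c^2 else 1 with hw
  have hc0 : 0 ≤ c := by rw [hc]; linarith [hp.1]
  have hc1 : c ≤ 1 := by rw [hc]; linarith [hp.2]
  have hw_mem : ∀ z, 0 ≤ w z ∧ w z ≤ 1 := by
    intro z; rw [hw]; dsimp only; split <;> constructor <;> nlinarith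
  have hwmeas : Measurable w := Measurable.ite measurableSet_Ici measurable_const measurable_const
  have hi : Integrable (fun z : ℝ => tp p (a * z) * z * phi1 z) := by
    apply integrable_abs_mul_phi1.mono'
    · exact ((((continuous_tp hp).comp (continuous_const.mul continuous_id)).mul
        continuous_id).mul continuous_phi1).aestronglyMeasurable
    · filter_upwards with z
      rw [norm_mul, norm_mul, Real.norm_eq_abs, Real.norm_eq_abs, Real.norm_eq_abs,
        abs_of_nonneg (phi1_nonneg z)]
      have h1 : |tp p (a * z)| ≤ 1 := by
        have := tp_mem hp (a * z); rw [abs_le]; exact ⟨this.1, this.2⟩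
      nlinarith [mul_le_mul_of_nonneg_right h1 (mul_nonneg (abs_nonneg z) (phi1_nonneg z)),
        abs_nonneg z, phi1_nonneg z]
  have hg2 : Integrable (fun z : ℝ => w z * z ^ 2 * phi1 z) := by
    apply integrable_sq_mul_phi1.mono'
    · exact (((hwmeas.mul (measurable_id.pow_const 2)).mul
        continuous_phi1.measurable).aestronglyMeasurable)
    · filter_upwards with z
      rw [Real.norm_eq_abs, abs_mul, abs_mul]
      have := hw_mem z
      rw [abs_of_nonneg this.1, abs_of_nonneg (phi1_nonneg z), abs_of_nonneg (sq_nonneg z)]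
      nlinarith [mul_le_mul_of_nonneg_right this.2 (mul_nonneg (sq_nonneg z) (phi1_nonneg z)),
        sq_nonneg z, phi1_nonneg z]
  have hg : Integrable (fun z : ℝ => c * (z * phi1 z) + a * (w z * z ^ 2 * phi1 z)) :=
    (integrable_id_mul_phi1.const_mul c).add (hg2.const_mul a)
  have hmono : ∫ z : ℝ, tp p (a * z) * z * phi1 z
      ≤ ∫ z : ℝ, (c * (z * phi1 z) + a * (w z * z ^ 2 * phi1 z)) := by
    apply integral_mono hi hg
    intro z
    have hpt := tp_pointwise hp ha z
    rw [← hc] at hpt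
    have hφ := phi1_nonneg z
    have h2 := mul_le_mul_of_nonneg_right hpt hφ
    dsimp only
    rw [hw]
    exact h2.trans_eq (by ring)
  have hval : ∫ z : ℝ, (c * (z * phi1 z) + a * (w z * z ^ 2 * phi1 z))
      = a * (1 - c^2/2) := by
    rw [integral_add (integrable_id_mul_phi1.const_mul c) (hg2.const_mul a),
      integral_const_mul, integral_const_mul, integral_id_mul_phi1]
    have hsplit := intervalIntegral.integral_Iic_add_Ioi (b := (0:ℝ))
      (hg2.integrableOn) (hg2.integrableOn)
    have hIic : ∫ z in Iic (0:ℝ), w z * z ^ 2 * phi1 z = 1/2 := by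
      rw [← integral_Iic_sq_mul_phi1]
      apply setIntegral_congr_fun measurableSet_Iic
      intro z hz
      rcases eq_or_lt_of_le (mem_Iic.mp hz) with h0 | h0
      · subst h0; simp
      · rw [hw]; dsimp only; rw [if_neg (not_le.mpr h0)]; ring
    have hIoi : ∫ z in Ioi (0:ℝ), w z * z ^ 2 * phi1 z = (1 - c^2) * (1/2) := by
      have : ∫ z in Ioi (0:ℝ), w z * z ^ 2 * phi1 z
          = (1 - c^2) * ∫ z in Ioi (0:ℝ), z ^ 2 * phi1 z := by
        rw [← integral_const_mul]
        apply setIntegral_congr_fun measurableSet_Ioi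
        intro z hz
        rw [hw]; dsimp only; rw [if_pos (le_of_lt hz)]; ring
      rw [this, integral_Ioi_sq_mul_phi1]
    rw [hIic, hIoi] at hsplit
    rw [← hsplit]
    ring
  rw [hval] at hmono
  exact hmono



set_option maxHeartbeats 1000000 in
/-- `ρ ∈ (0,1)` and `m(θ) ≤ ρ·θ` on `[0, θ₀]`. -/
theorem m_contraction
    (p : ℝ) (hp : p ∈ Set.Ioo (1 / 2 : ℝ) 1) (d : ℕ) (hd : 1 ≤ d)
    (θ0 : ℝ) (hθ00 : 0 ≤ θ0) (hθ0 : θ0 < θmax p d) :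
    ρc p d θ0 ∈ Set.Ioo (0 : ℝ) 1 ∧
      ∀ θ ∈ Set.Icc (0 : ℝ) θ0, m p d θ ≤ ρc p d θ0 * θ := by
  have hp' : p ∈ Set.Ioo (1/2 : ℝ) 1 := by norm_num at hp ⊢; exact hp
  set c := 2 * p - 1 with hcdef
  have hc0 : 0 < c := by rw [hcdef]; linarith [hp'.1]
  have hc1 : c < 1 := by rw [hcdef]; linarith [hp'.2]
  set q := qp p with hqdef
  have hqc : q = 1 - c ^ 2 / 2 := by rw [hqdef, qp, hcdef]
  have hq0 : 0 < q := by rw [hqc]; nlinarith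
  have hq1 : q < 1 := by rw [hqc]; nlinarith
  set s := Real.sqrt (8 * q + q ^ 2) with hsdef
  have hs0 : 0 ≤ s := Real.sqrt_nonneg _
  have hs2 : s ^ 2 = 8 * q + q ^ 2 := Real.sq_sqrt (by nlinarith)
  have hqs : q ≤ s := by nlinarith [sq_nonneg (s - q), sq_nonneg (s + q)]
  have hd0 : (0 : ℝ) < d := by exact_mod_cast Nat.pos_of_ne_zero (by omega)
  have h2qs : 0 ≤ 2 + q - s := by nlinarith [sq_nonneg (s - (2 + q)), sq_nonneg (s + (2 + q))]
  have hθ0sq : θ0 ^ 2 < (d : ℝ) * (2 + q - s) / 2 := by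
    have := (Real.lt_sqrt hθ00).mp hθ0
    convert this using 2
  set u := θ0 ^ 2 / (d : ℝ) with hudef
  have hu0 : 0 ≤ u := div_nonneg (sq_nonneg θ0) hd0.le
  have hu : u < (2 + q - s) / 2 := by
    rw [hudef, div_lt_div_iff₀ hd0 (by norm_num)]
    linarith [hθ0sq]
  have hu1 : u < 1 := by linarith
  have h1u : 0 < 1 - u := by linarith
  have hb : (1 + u) * q < (1 - u) ^ 2 := by
    have hsl : s < 2 + q - 2 * u := by linarith
    have h2 : s ^ 2 < (2 + q - 2 * u) ^ 2 := by nlinarith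
    nlinarith
  have hρ : ρc p d θ0 = (1 + u) / (1 - u) ^ 2 * q := by
    rw [ρc, hudef, hqc]
  constructor
  · rw [hρ]
    constructor
    · exact mul_pos (div_pos (by linarith) (pow_pos h1u 2)) hq0
    · rw [div_mul_eq_mul_div, div_lt_one (pow_pos h1u 2)]
      linarith
  · intro θ hθ
    have hθ0' : 0 ≤ θ := hθ.1
    have hθθ0 : θ ≤ θ0 := hθ.2
    have htu : θ ^ 2 / (d : ℝ) ≤ u := by
      rw [hudef]
      rw [div_le_div_iff_of_pos_right hd0]
      nlinarith
    have hden : 0 < 1 - θ ^ 2 / (d : ℝ) := by linarith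
    have ha : 0 ≤ θ / (1 - θ ^ 2 / (d : ℝ)) := div_nonneg hθ0' hden.le
    have hm : m p d θ = ∫ z : ℝ, tp p (θ / (1 - θ ^ 2 / (d : ℝ)) * z) * z * phi1 z := by
      rw [m, gexp]
      congr 1
      funext z
      rw [mul_div_right_comm]
    have hkey := key_integral_bound hp' ha
    rw [← hcdef, ← hqc] at hkey
    rw [hm]
    refine hkey.trans ?_
    have hfrac : 1 / (1 - θ ^ 2 / (d : ℝ)) ≤ (1 + u) / (1 - u) ^ 2 := by
      rw [div_le_div_iff₀ hden (pow_pos h1u 2)]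
      have e1 : (1-u) * (1-u) ≤ (1-u) * (1 - θ^2/(d:ℝ)) :=
        mul_le_mul_of_nonneg_left (by linarith) h1u.le
      have e2 : (1-u) * (1 - θ^2/(d:ℝ)) ≤ (1+u) * (1 - θ^2/(d:ℝ)) :=
        mul_le_mul_of_nonneg_right (by linarith) hden.le
      nlinarith [e1, e2]
    calc θ / (1 - θ ^ 2 / (d : ℝ)) * q = (1 / (1 - θ ^ 2 / (d : ℝ))) * (q * θ) := by ring
      _ ≤ ((1 + u) / (1 - u) ^ 2) * (q * θ) :=
          mul_le_mul_of_nonneg_right hfrac (mul_nonneg hq0.le hθ0')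
      _ = ρc p d θ0 * θ := by rw [hρ]; ring

end OMDA
end
end

section
/- For every real t with |t| ≤ 1/4, one has 1/(2·√(1−2t)) + 1/(2·√(1+2t)) ≤ 1 + 2t². -/
open MeasureTheory Real Set
open scoped ENNReal

noncomputable section

namespace OMDA

/-- the elementary inequality `(⋆)`. -/
theorem sech_moment_ineq (t : ℝ) (ht : |t| ≤ 1 / 4) :
    1 / (2 * Real.sqrt (1 - 2 * t)) + 1 / (2 * Real.sqrt (1 + 2 * t)) ≤ 1 + 2 * t ^ 2 := by
  rw [abs_le] at ht
  obtain ⟨h1, h2⟩ := ht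
  have h1' : (0:ℝ) < 1 - 2 * t := by linarith
  have h2' : (0:ℝ) < 1 + 2 * t := by linarith
  have hu : t ^ 2 ≤ 1 / 16 := by nlinarith
  set a := Real.sqrt (1 - 2 * t) with hadef
  set b := Real.sqrt (1 + 2 * t) with hbdef
  have ha : 0 < a := Real.sqrt_pos.mpr h1'
  have hb : 0 < b := Real.sqrt_pos.mpr h2'
  have ha2 : a ^ 2 = 1 - 2 * t := Real.sq_sqrt h1'.le
  have hb2 : b ^ 2 = 1 + 2 * t := Real.sq_sqrt h2'.le
  have hab2 : (a * b) ^ 2 = 1 - 4 * t ^ 2 := by rw [mul_pow, ha2, hb2]; ring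
  have hs : a * b ≤ 1 - 2 * t ^ 2 := by
    nlinarith [mul_pos ha hb, sq_nonneg (t ^ 2)]
  have hsq : (a + b) ^ 2 ≤ ((2 + 4 * t ^ 2) * (a * b)) ^ 2 := by
    have : (a + b) ^ 2 = 2 + 2 * (a * b) := by nlinarith [ha2, hb2]
    rw [this, mul_pow, hab2]
    nlinarith [sq_nonneg t, mul_nonneg (sq_nonneg t) (sq_nonneg t)]
  have key : a + b ≤ (2 + 4 * t ^ 2) * (a * b) := by
    have hpos : 0 ≤ (2 + 4 * t ^ 2) * (a * b) := by positivity
    exact (pow_le_pow_iff_left₀ (by positivity) hpos (by norm_num)).mp hsq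
  rw [div_add_div _ _ (by positivity) (by positivity), div_le_iff₀ (by positivity)]
  nlinarith [key, mul_pos ha hb, sq_nonneg t]

end OMDA
end
end
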